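/- arXiv:2507.11013 — 6 statements merged into one kernel-verified Lean document; each statement's English description precedes it below -/
import Mathlib

section
/- Let S_1,...,S_h be closed convex sets in ℝ^n with empty total intersection, and suppose points x_1,...,x_h satisfy x_i ∈ ⋂_{j≠i} S_j. Let p be a point of the convex hull of {x_1,...,x_h} minimizing max_i dist(p, S_i). Then p ∉ S_i for every i. -/
/-!
Suppose `p ∈ S i₀` and move `p` to `(1 - t) • p + t • x i₀`, still in the convex hull. Distance to
a convex set is a convex function, and `x i₀` lies in every `S j` with `j ≠ i₀`, so those distances
shrink by the factor `1 - t`, while the distance to `S i₀` is at most `t * infDist (x i₀) (S i₀)`.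
As the `S j` are closed with empty intersection, the maximal distance at `p` is positive, hence
it strictly decreases for small `t > 0`, contradicting minimality of `p`.
-/

namespace Metric

theorem iSup_infDist_pos {α ι : Type*} [PseudoMetricSpace α] [Finite ι] {S : ι → Set α}
    (hclosed : ∀ i, IsClosed (S i)) (hne : ∀ i, (S i).Nonempty) (hempty : ⋂ i, S i = ∅) (p : α) :
    0 < ⨆ i, infDist p (S i) := by
  have hp : p ∉ ⋂ i, S i := hempty ▸ Set.notMem_empty p
  obtain ⟨i, hi⟩ := not_forall.1 (Set.mem_iInter.not.1 hp)
  exact ((hclosed i).notMem_iff_infDist_pos (hne i)).1 hi |>.trans_le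
    (le_ciSup (Set.finite_range fun i => infDist p (S i)).bddAbove i)

variable {E : Type*} [SeminormedAddCommGroup E] [NormedSpace ℝ E]

theorem convexOn_infDist {s : Set E} (hs : Convex ℝ s) :
    ConvexOn ℝ Set.univ (infDist · s) := by
  refine ⟨convex_univ, fun x _ y _ a b ha hb hab => ?_⟩
  rcases s.eq_empty_or_nonempty with rfl | hne
  · simp
  refine le_of_forall_pos_le_add fun ε hε => ?_
  obtain ⟨u, hu, hxu⟩ := (infDist_lt_iff hne).1 (lt_add_of_pos_right (infDist x s) hε)
  obtain ⟨v, hv, hyv⟩ := (infDist_lt_iff hne).1 (lt_add_of_pos_right (infDist y s) hε)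
  calc infDist (a • x + b • y) s
      ≤ dist (a • x + b • y) (a • u + b • v) := infDist_le_dist_of_mem (hs hu hv ha hb hab)
    _ ≤ a * dist x u + b * dist y v := by
      refine (dist_add_add_le _ _ _ _).trans ?_
      rw [dist_smul₀, dist_smul₀, Real.norm_of_nonneg ha, Real.norm_of_nonneg hb]
    _ ≤ a * (infDist x s + ε) + b * (infDist y s + ε) := by gcongr
    _ = a • infDist x s + b • infDist y s + ε := by
      simp only [smul_eq_mul]; linear_combination ε * hab

theorem exists_iSup_infDist_segment_lt {ι : Type*} [Finite ι] {S : ι → Set E}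
    (hconv : ∀ i, Convex ℝ (S i)) {i₀ : ι} {p y : E} (hp : p ∈ S i₀) (hy : ∀ j ≠ i₀, y ∈ S j)
    (hpos : 0 < ⨆ j, infDist p (S j)) :
    ∃ t ∈ Set.Ioc (0 : ℝ) 1,
      ⨆ j, infDist ((1 - t) • p + t • y) (S j) < ⨆ j, infDist p (S j) := by
  set M := ⨆ j, infDist p (S j)
  have hd : 0 ≤ infDist y (S i₀) := infDist_nonneg
  -- small enough that `t * infDist y (S i₀) < M`
  set t := M / (M + infDist y (S i₀))
  have ht₀ : 0 < t := by positivity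
  have ht₁ : t ≤ 1 := div_le_one_of_le₀ (by linarith) (by positivity)
  refine ⟨t, ⟨ht₀, ht₁⟩, ?_⟩
  have : Nonempty ι := ⟨i₀⟩
  obtain ⟨j, hj⟩ := exists_eq_ciSup_of_finite (f := fun j => infDist ((1 - t) • p + t • y) (S j))
  rw [← hj]
  have hconvex := (convexOn_infDist (hconv j)).2 (Set.mem_univ p) (Set.mem_univ y)
    (sub_nonneg.2 ht₁) ht₀.le (sub_add_cancel 1 t)
  simp only [smul_eq_mul] at hconvex
  refine hconvex.trans_lt ?_
  by_cases hji : j = i₀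
  · subst hji
    rw [infDist_zero_of_mem hp, mul_zero, zero_add, div_mul_eq_mul_div, div_lt_iff₀ (by positivity)]
    nlinarith
  · rw [infDist_zero_of_mem (hy j hji), mul_zero, add_zero]
    calc (1 - t) * infDist p (S j)
        ≤ (1 - t) * M := by
          gcongr
          exact le_ciSup (Set.finite_range fun j => infDist p (S j)).bddAbove j
      _ < M := by nlinarith

end Metric

open Metric

theorem stmt4 {n h : ℕ} (S : Fin h → Set (EuclideanSpace ℝ (Fin n)))
    (hclosed : ∀ i, IsClosed (S i)) (hconv : ∀ i, Convex ℝ (S i))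
    (hempty : (⋂ i, S i) = ∅)
    (x : Fin h → EuclideanSpace ℝ (Fin n))
    (hx : ∀ i j, j ≠ i → x i ∈ S j)
    (p : EuclideanSpace ℝ (Fin n))
    (hp : p ∈ convexHull ℝ (Set.range x))
    (hmin : ∀ q ∈ convexHull ℝ (Set.range x),
      (⨆ i, infDist p (S i)) ≤ ⨆ i, infDist q (S i)) :
    ∀ i, p ∉ S i := by
  intro i₀ hpS
  have hne : ∀ j, (S j).Nonempty := fun j =>
    if hj : j = i₀ then ⟨p, hj ▸ hpS⟩ else ⟨x i₀, hx i₀ j hj⟩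
  obtain ⟨t, ⟨ht₀, ht₁⟩, hlt⟩ := exists_iSup_infDist_segment_lt hconv hpS (hx i₀)
    (iSup_infDist_pos hclosed hne hempty p)
  have hq : (1 - t) • p + t • x i₀ ∈ convexHull ℝ (Set.range x) :=
    convex_convexHull ℝ _ hp (subset_convexHull ℝ _ (Set.mem_range_self i₀))
      (sub_nonneg.2 ht₁) ht₀.le (sub_add_cancel 1 t)
  exact (hmin _ hq).not_gt hlt
end

section
/- Let K be a convex body in ℝ^n, L a supporting hyperplane of K at a regular boundary point x (i.e., x has a unique outer normal a, and L = {y : ⟨a,y⟩ = ⟨a,x⟩}). Then for every point p in the open halfspace {y : ⟨a,y⟩ < ⟨a,x⟩}, there exists λ > 0 such that the homothety x + λ(K - x) contains p. -/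
local notation "⟪" x ", " y "⟫_ℝ" => @inner ℝ _ _ x y

/-!
The homothets `x + λ • (K - x)`, `λ > 0`, exhaust `x + C`, where `C` is the convex cone generated
by `K - x`. A point outside the closure of `C` is separated from `C` by a hyperplane through the
origin, whose normal is a unit outer normal of `K` at `x`, hence equals `a` by regularity. So the
open halfspace `{w | ⟪a, w⟫ < 0}` lies in the closure of `C`; being open, it lies in the interior
of that closure, which for a convex set with nonempty interior is the interior of `C` itself.
-/

variable {E : Type*} [NormedAddCommGroup E] [InnerProductSpace ℝ E] [CompleteSpace E]

namespace ConvexCone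

theorem exists_inner_nonneg_of_notMem_closure (C : ConvexCone ℝ E)
    (hC : (C : Set E).Nonempty) {w : E} (hw : w ∉ closure (C : Set E)) :
    ∃ y : E, (∀ z ∈ C, 0 ≤ ⟪z, y⟫_ℝ) ∧ ⟪w, y⟫_ℝ < 0 := by
  lift C.closure to ProperCone ℝ E using ⟨hC.mono subset_closure, isClosed_closure⟩ with D hD
  have hDC : (D : Set E) = closure (C : Set E) := congrArg SetLike.coe hD
  obtain ⟨y, hy, hwy⟩ := D.hyperplane_separation' (x₀ := w) (by rwa [← SetLike.mem_coe, hDC])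
  refine ⟨y, fun z hz => hy z ?_, hwy⟩
  rw [← SetLike.mem_coe, hDC]
  exact subset_closure hz

theorem setOf_inner_neg_subset_closure_hull {s : Set E} (hne : s.Nonempty)
    {a : E} (hreg : ∀ a' : E, ‖a'‖ = 1 → (∀ v ∈ s, ⟪a', v⟫_ℝ ≤ 0) → a' = a) :
    {w | ⟪a, w⟫_ℝ < 0} ⊆ closure (hull ℝ s : Set E) := by
  intro w hw
  by_contra hwC
  obtain ⟨y, hy, hwy⟩ := (hull ℝ s).exists_inner_nonneg_of_notMem_closure
    (hne.mono subset_hull) hwC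
  have hy0 : 0 < ‖y‖ := norm_pos_iff.2 fun h => by simp [h] at hwy
  have ha : -(‖y‖⁻¹ • y) = a := by
    refine hreg _ (by rw [norm_neg, norm_smul, norm_inv, norm_norm, inv_mul_cancel₀ hy0.ne']) ?_
    intro v hv
    rw [inner_neg_left, real_inner_smul_left, real_inner_comm, neg_nonpos]
    exact mul_nonneg (inv_nonneg.2 hy0.le) (hy v (subset_hull hv))
  have : 0 < ⟪a, w⟫_ℝ := by
    rw [← ha, inner_neg_left, real_inner_smul_left, real_inner_comm, neg_pos]
    exact mul_neg_of_pos_of_neg (inv_pos.2 hy0) hwy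
  exact lt_asymm hw this

theorem setOf_inner_neg_subset_hull {s : Set E} (hint : (interior s).Nonempty)
    {a : E} (hreg : ∀ a' : E, ‖a'‖ = 1 → (∀ v ∈ s, ⟪a', v⟫_ℝ ≤ 0) → a' = a) :
    {w | ⟪a, w⟫_ℝ < 0} ⊆ hull ℝ s := by
  have hC : (interior (hull ℝ s : Set E)).Nonempty :=
    hint.mono (interior_mono subset_hull)
  calc {w | ⟪a, w⟫_ℝ < 0}
      ⊆ interior (closure (hull ℝ s : Set E)) :=
        interior_maximal (setOf_inner_neg_subset_closure_hull (hint.mono interior_subset) hreg)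
          (isOpen_lt (continuous_const.inner continuous_id) continuous_const)
    _ = interior (hull ℝ s) :=
        (hull ℝ s).convex.interior_closure_eq_interior_of_nonempty_interior hC
    _ ⊆ hull ℝ s := interior_subset

end ConvexCone

theorem Convex.exists_homothety_mem_of_inner_lt {K : Set E} (hK : Convex ℝ K)
    (hint : (interior K).Nonempty) {x a : E}
    (hreg : ∀ a' : E, ‖a'‖ = 1 → (∀ y ∈ K, ⟪a', y⟫_ℝ ≤ ⟪a', x⟫_ℝ) → a' = a)
    {p : E} (hp : ⟪a, p⟫_ℝ < ⟪a, x⟫_ℝ) :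
    ∃ lam : ℝ, 0 < lam ∧ p ∈ (fun y => x + lam • (y - x)) '' K := by
  set s := (fun v => x + v) ⁻¹' K
  have hs : Convex ℝ s := hK.translate_preimage_right x
  have hsint : (interior s).Nonempty := by
    obtain ⟨z, hz⟩ := hint
    exact ⟨z - x, preimage_interior_subset_interior_preimage (continuous_const_add x)
      (by simpa using hz)⟩
  have hsreg : ∀ a' : E, ‖a'‖ = 1 → (∀ v ∈ s, ⟪a', v⟫_ℝ ≤ 0) → a' = a := by
    refine fun a' ha' hs' => hreg a' ha' fun y hy => ?_
    have := hs' (y - x) (by simpa [s] using hy)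
    rwa [inner_sub_right, sub_nonpos] at this
  obtain ⟨lam, hlam, v, hv, hvp⟩ := (ConvexCone.mem_hull_of_convex hs).1 <|
    ConvexCone.setOf_inner_neg_subset_hull hsint hsreg
      (show ⟪a, p - x⟫_ℝ < 0 by rw [inner_sub_right]; linarith)
  refine ⟨lam, hlam, x + v, hv, ?_⟩
  simp only [add_sub_cancel_left, hvp]
  abel

theorem stmt7_general {n : ℕ} (K : Set (EuclideanSpace ℝ (Fin n)))
    (hKconv : Convex ℝ K) (hKint : (interior K).Nonempty)
    (x : EuclideanSpace ℝ (Fin n))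
    (a : EuclideanSpace ℝ (Fin n))
    (hreg : ∀ a' : EuclideanSpace ℝ (Fin n), ‖a'‖ = 1 →
      (∀ y ∈ K, ⟪a', y⟫_ℝ ≤ ⟪a', x⟫_ℝ) → a' = a) :
    ∀ p : EuclideanSpace ℝ (Fin n), ⟪a, p⟫_ℝ < ⟪a, x⟫_ℝ →
      ∃ lam : ℝ, 0 < lam ∧ p ∈ (fun y => x + lam • (y - x)) '' K :=
  fun _ hp => hKconv.exists_homothety_mem_of_inner_lt hKint hreg hp

theorem stmt7 {n : ℕ} (K : Set (EuclideanSpace ℝ (Fin n)))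
    (hKcomp : IsCompact K) (hKconv : Convex ℝ K) (hKint : (interior K).Nonempty)
    (x : EuclideanSpace ℝ (Fin n)) (hx : x ∈ frontier K)
    (a : EuclideanSpace ℝ (Fin n)) (ha : ‖a‖ = 1)
    (hsupp : ∀ y ∈ K, ⟪a, y⟫_ℝ ≤ ⟪a, x⟫_ℝ)
    (hreg : ∀ a' : EuclideanSpace ℝ (Fin n), ‖a'‖ = 1 →
      (∀ y ∈ K, ⟪a', y⟫_ℝ ≤ ⟪a', x⟫_ℝ) → a' = a) :
    ∀ p : EuclideanSpace ℝ (Fin n), ⟪a, p⟫_ℝ < ⟪a, x⟫_ℝ →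
      ∃ lam : ℝ, 0 < lam ∧ p ∈ (fun y => x + lam • (y - x)) '' K :=
  stmt7_general K hKconv hKint x a hreg
end

section
/- Let K be a convex body in ℝ^n, and suppose p ∈ conv_K X (the intersection of all translates of K containing X) but p ∉ conv_K X' for every proper subset X' ⊂ X, where X ⊆ K is finite. Then for each x ∈ X there exists an outer normal a of K such that ⟨a, x⟩ ≥ ⟨a, p⟩ and ⟨a, x⟩ > ⟨a, y⟩ for every y ∈ X \ {x}. -/
/-!
Fix `x ∈ X`. By minimality some translate `t + K` contains `X \ {x}` but not `p`. Sliding the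
translate back along the segment from `t + K` to `K`, every intermediate translate `s • t + K`
still contains `X \ {x}` (convexity of `K`), so `p` lies in each one that also contains `x`.
If `x` were a combination `β • p + (1 - β) • z` with `β < 1` and `z ∈ conv (X \ {x})`, then from
the last translate `s₀ • t + K` containing `x` we would reach a strictly later one containing `x`.
Hence `x` lies neither in `conv (X \ {x})` nor, unless `x = p`, in `conv ({p} ∪ X \ {x})`, and a
separating hyperplane provides the outer normal.
-/

local notation "⟪" x ", " y "⟫_ℝ" => @inner ℝ _ _ x y

/-- The `K`-strongly convex hull of `X`: the intersection of all translates of `K`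
containing `X`. -/
def convK {n : ℕ} (K X : Set (EuclideanSpace ℝ (Fin n))) : Set (EuclideanSpace ℝ (Fin n)) :=
  ⋂₀ {S | (∃ t : EuclideanSpace ℝ (Fin n), S = (fun y => t + y) '' K) ∧ X ⊆ S}

open Set

lemma mem_translate_iff {E : Type*} [AddCommGroup E] {K : Set E} {t z : E} :
    z ∈ (t + ·) '' K ↔ z - t ∈ K := by
  simp [Set.image_add_left, sub_eq_neg_add]

section Translate

variable {E : Type*} [AddCommGroup E] [Module ℝ E]

lemma inter_translate_subset_translate_smul {K : Set E} (hK : Convex ℝ K) (t : E) {s : ℝ}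
    (hs : s ∈ Icc (0 : ℝ) 1) : K ∩ (t + ·) '' K ⊆ (s • t + ·) '' K := by
  rintro y ⟨hyK, hyt⟩
  rw [mem_translate_iff] at hyt ⊢
  have hcomb := hK hyK hyt (sub_nonneg.2 hs.2) hs.1 (sub_add_cancel 1 s)
  rwa [show (1 - s) • y + s • (y - t) = y - s • t by module] at hcomb

lemma eq_of_mem_convexHull_insert {s : Set E} {p x : E}
    (h : ∀ β ∈ Ico (0 : ℝ) 1, ∀ z ∈ convexHull ℝ s, x ≠ β • p + (1 - β) • z)
    (hx : x ∈ convexHull ℝ (insert p s)) : x = p := by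
  rcases s.eq_empty_or_nonempty with rfl | hs
  · simpa using hx
  rw [convexHull_insert hs, convexJoin_singleton_left] at hx
  obtain ⟨z, hz, β, γ, hβ, hγ, hβγ, rfl⟩ := mem_iUnion₂.1 hx
  obtain rfl : γ = 1 - β := by linarith
  by_contra hne
  refine h β ⟨hβ, lt_of_le_of_ne (by linarith) ?_⟩ z hz rfl
  rintro rfl
  simp at hne

end Translate

lemma exists_ne_zero_forall_inner_lt_of_notMem_convexHull {E : Type*} [NormedAddCommGroup E]
    [InnerProductSpace ℝ E] [CompleteSpace E] [Nontrivial E] {s : Set E} (hs : s.Finite) {x : E}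
    (hx : x ∉ convexHull ℝ s) : ∃ a ≠ 0, ∀ y ∈ s, ⟪a, y⟫_ℝ < ⟪a, x⟫_ℝ := by
  obtain ⟨f, u, hfs, hfx⟩ :=
    geometric_hahn_banach_closed_point (convex_convexHull ℝ s)
      (hs.isClosed_convexHull (𝕜 := ℝ)) hx
  set a := (InnerProductSpace.toDual ℝ E).symm f
  have hlt : ∀ y ∈ s, ⟪a, y⟫_ℝ < ⟪a, x⟫_ℝ := fun y hy => by
    simp only [a, InnerProductSpace.toDual_symm_apply]
    exact (hfs y (subset_convexHull ℝ s hy)).trans hfx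
  by_cases ha : a = 0
  · obtain ⟨b, hb⟩ := exists_ne (0 : E)
    refine ⟨b, hb, fun y hy => ?_⟩
    simpa [ha] using hlt y hy
  · exact ⟨a, ha, hlt⟩

section ConvK

variable {n : ℕ} {K : Set (EuclideanSpace ℝ (Fin n))}

lemma exists_translate_of_notMem_convK {X : Set (EuclideanSpace ℝ (Fin n))}
    {p : EuclideanSpace ℝ (Fin n)} (hp : p ∉ convK K X) :
    ∃ t, X ⊆ (t + ·) '' K ∧ p ∉ (t + ·) '' K := by
  simp only [convK, mem_sInter, not_forall] at hp
  obtain ⟨_, ⟨⟨t, rfl⟩, hX⟩, hpt⟩ := hp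
  exact ⟨t, hX, hpt⟩

lemma ne_smul_add_smul_of_mem_convK_insert (hKcl : IsClosed K) (hKconv : Convex ℝ K)
    {X : Set (EuclideanSpace ℝ (Fin n))} {x p t z : EuclideanSpace ℝ (Fin n)} {β : ℝ}
    (hxK : x ∈ K) (hXt : X ⊆ K ∩ (t + ·) '' K) (hp : p ∈ convK K (insert x X))
    (hpt : p ∉ (t + ·) '' K) (hβ : β ∈ Ico (0 : ℝ) 1) (hzt : z ∈ K ∩ (t + ·) '' K) :
    x ≠ β • p + (1 - β) • z := by
  intro hxe
  set S : Set ℝ := Icc 0 1 ∩ {s | x - s • t ∈ K}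
  have hp_of_mem : ∀ s ∈ S, p - s • t ∈ K := fun s hs => by
    refine mem_translate_iff.1 (mem_sInter.1 hp _ ⟨⟨s • t, rfl⟩, insert_subset ?_ ?_⟩)
    · exact mem_translate_iff.2 hs.2
    · exact hXt.trans (inter_translate_subset_translate_smul hKconv t hs.1)
  have h0S : (0 : ℝ) ∈ S := ⟨left_mem_Icc.2 zero_le_one, by simpa using hxK⟩
  have h1S : (1 : ℝ) ∉ S := fun h1 => hpt (mem_translate_iff.2 (by simpa using hp_of_mem 1 h1))
  have hScl : IsClosed S :=
    isClosed_Icc.inter (hKcl.preimage (continuous_const.sub (continuous_id.smul continuous_const)))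
  have hs₀ : sSup S ∈ S := hScl.csSup_mem ⟨0, h0S⟩ ⟨1, fun s hs => hs.1.2⟩
  set s₀ := sSup S
  have hs₀1 : s₀ < 1 := lt_of_le_of_ne hs₀.1.2 fun h => h1S (h ▸ hs₀)
  have hlater : β * s₀ + (1 - β) ∈ S := by
    refine ⟨⟨by nlinarith [hβ.1, hβ.2, hs₀.1.1], by nlinarith [hβ.1, hs₀1]⟩, ?_⟩
    have hcomb := hKconv (hp_of_mem s₀ hs₀) (mem_translate_iff.1 hzt.2) hβ.1
      (sub_nonneg.2 hβ.2.le) (add_sub_cancel β 1)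
    rwa [show β • (p - s₀ • t) + (1 - β) • (z - t) = x - (β * s₀ + (1 - β)) • t by
      rw [hxe]; module] at hcomb
  have := le_csSup ⟨1, fun s hs => hs.1.2⟩ hlater
  nlinarith [hβ.2]

end ConvK

theorem stmt9_general {n : ℕ} [DecidableEq (EuclideanSpace ℝ (Fin n))] (K : Set (EuclideanSpace ℝ (Fin n)))
    (hKcomp : IsCompact K) (hKconv : Convex ℝ K)
    (X : Finset (EuclideanSpace ℝ (Fin n))) (hXK : ↑X ⊆ K)
    (p : EuclideanSpace ℝ (Fin n)) (hp : p ∈ convK K ↑X)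
    (hmin : ∀ x ∈ X, p ∉ convK K ↑(X.erase x)) :
    ∀ x ∈ X, ∃ a : EuclideanSpace ℝ (Fin n), a ≠ 0 ∧
      (∃ z ∈ K, ∀ y ∈ K, ⟪a, y⟫_ℝ ≤ ⟪a, z⟫_ℝ) ∧
      ⟪a, p⟫_ℝ ≤ ⟪a, x⟫_ℝ ∧
      ∀ y ∈ X, y ≠ x → ⟪a, y⟫_ℝ < ⟪a, x⟫_ℝ := by
  intro x hx
  obtain ⟨t, hsub, hpt⟩ := exists_translate_of_notMem_convK (hmin x hx)
  have : Nontrivial (EuclideanSpace ℝ (Fin n)) :=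
    nontrivial_of_ne p (t + x) fun h => hpt ⟨x, hXK hx, h.symm⟩
  have hT : convexHull ℝ ↑(X.erase x) ⊆ K ∩ (t + ·) '' K :=
    convexHull_min (subset_inter ((Finset.coe_subset.2 (X.erase_subset x)).trans hXK) hsub)
      (hKconv.inter (hKconv.translate t))
  have hp' : p ∈ convK K (insert x ↑(X.erase x)) := by
    rwa [← Finset.coe_insert, Finset.insert_erase hx]
  have key : ∀ β ∈ Ico (0 : ℝ) 1, ∀ z ∈ convexHull ℝ ↑(X.erase x), x ≠ β • p + (1 - β) • z :=
    fun β hβ z hz => ne_smul_add_smul_of_mem_convK_insert hKcomp.isClosed hKconv (hXK hx)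
      ((subset_convexHull ℝ _).trans hT) hp' hpt hβ (hT hz)
  obtain ⟨a, ha0, hpa, hya⟩ :
      ∃ a ≠ 0, ⟪a, p⟫_ℝ ≤ ⟪a, x⟫_ℝ ∧ ∀ y ∈ X.erase x, ⟪a, y⟫_ℝ < ⟪a, x⟫_ℝ := by
    rcases eq_or_ne x p with rfl | hxp
    · obtain ⟨a, ha0, ha⟩ := exists_ne_zero_forall_inner_lt_of_notMem_convexHull
        (X.erase x).finite_toSet fun hmem => key 0 ⟨le_rfl, one_pos⟩ x hmem (by simp)
      exact ⟨a, ha0, le_rfl, ha⟩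
    · obtain ⟨a, ha0, ha⟩ := exists_ne_zero_forall_inner_lt_of_notMem_convexHull
        ((X.erase x).finite_toSet.insert p)
        fun hmem => hxp (eq_of_mem_convexHull_insert key hmem)
      exact ⟨a, ha0, (ha p (mem_insert p _)).le, fun y hy => ha y (mem_insert_of_mem p hy)⟩
  obtain ⟨z, hzK, hz⟩ := hKcomp.exists_isMaxOn ⟨x, hXK hx⟩
    (continuous_const.inner continuous_id : Continuous fun y => ⟪a, y⟫_ℝ).continuousOn
  exact ⟨a, ha0, ⟨z, hzK, fun y hy => hz hy⟩, hpa,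
    fun y hy hne => hya y (Finset.mem_erase.2 ⟨hne, hy⟩)⟩

theorem stmt9 {n : ℕ} [DecidableEq (EuclideanSpace ℝ (Fin n))] (K : Set (EuclideanSpace ℝ (Fin n)))
    (hKcomp : IsCompact K) (hKconv : Convex ℝ K) (hKint : (interior K).Nonempty)
    (X : Finset (EuclideanSpace ℝ (Fin n))) (hXK : ↑X ⊆ K)
    (p : EuclideanSpace ℝ (Fin n)) (hp : p ∈ convK K ↑X)
    (hmin : ∀ x ∈ X, p ∉ convK K ↑(X.erase x)) :
    ∀ x ∈ X, ∃ a : EuclideanSpace ℝ (Fin n), a ≠ 0 ∧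
      (∃ z ∈ K, ∀ y ∈ K, ⟪a, y⟫_ℝ ≤ ⟪a, z⟫_ℝ) ∧
      ⟪a, p⟫_ℝ ≤ ⟪a, x⟫_ℝ ∧
      ∀ y ∈ X, y ≠ x → ⟪a, y⟫_ℝ < ⟪a, x⟫_ℝ :=
  stmt9_general K hKcomp hKconv X hXK p hp hmin
end

section
/- Let K be a polytope in ℝ^n with set of facet normals H, let h be the Carathéodory number for H-convexity and k the Carathéodory number for K-strong convexity. Then k ≤ max(h, |H| - 1). -/
local notation "⟪" x ", " y "⟫_ℝ" => @inner ℝ _ _ x y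

/-- The `H`-convex hull of `X`. -/
def convH {n : ℕ} (H X : Set (EuclideanSpace ℝ (Fin n))) : Set (EuclideanSpace ℝ (Fin n)) :=
  ⋂₀ {S | (∃ a ∈ H, ∃ b : ℝ, S = {y | ⟪a, y⟫_ℝ ≤ b}) ∧ X ⊆ S}

/-- `c` is a Carathéodory bound for `H`-convexity. -/
def caraH {n : ℕ} (H : Set (EuclideanSpace ℝ (Fin n))) (c : ℕ) : Prop :=
  ∀ X : Set (EuclideanSpace ℝ (Fin n)), IsClosed X →
    convH H X = ⋃ (X' : Finset (EuclideanSpace ℝ (Fin n)))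
      (_ : ↑X' ⊆ X ∧ X'.card ≤ c), convH H ↑X'

/-- `c` is a Carathéodory bound for `K`-strong convexity. -/
def caraK {n : ℕ} (K : Set (EuclideanSpace ℝ (Fin n))) (c : ℕ) : Prop :=
  ∀ X : Set (EuclideanSpace ℝ (Fin n)), IsClosed X →
    (∃ t : EuclideanSpace ℝ (Fin n), X ⊆ (fun y => t + y) '' K) →
    convK K X = ⋃ (X' : Finset (EuclideanSpace ℝ (Fin n)))
      (_ : ↑X' ⊆ X ∧ X'.card ≤ c), convK K ↑X'

/-!
If `X` lies in a translate `t₀ + K` and `z ∈ conv_K X`, pick for every normal `a ∈ H` a point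
`f a ∈ X` maximising `⟪a, ·⟫` on `X` (`X` is compact). If `z` satisfies `⟪a, z⟫ ≤ ⟪a, f a⟫` for
all `a ∈ H`, then `z ∈ conv_H X`, and `h` points suffice since `conv_H ⊆ conv_K`. Otherwise some
`a₀ ∈ H` has `⟪a₀, f a₀⟫ < ⟪a₀, z⟫`, and the `|H| - 1` points `f a`, `a ≠ a₀`, already work: a
translate `t + K` containing them but violating the `a₀`-constraint at `f a₀` can be slid towards
`t₀` until that constraint is tight, producing a translate that contains `X` but not `z`.
-/

open Set

variable {n : ℕ}

theorem mem_convH_iff {H X : Set (EuclideanSpace ℝ (Fin n))} {z : EuclideanSpace ℝ (Fin n)} :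
    z ∈ convH H X ↔ ∀ S : Set (EuclideanSpace ℝ (Fin n)),
      ((∃ a ∈ H, ∃ b : ℝ, S = {y | ⟪a, y⟫_ℝ ≤ b}) ∧ X ⊆ S) → z ∈ S :=
  Iff.rfl

theorem mem_convK_iff {K X : Set (EuclideanSpace ℝ (Fin n))} {z : EuclideanSpace ℝ (Fin n)} :
    z ∈ convK K X ↔ ∀ S : Set (EuclideanSpace ℝ (Fin n)),
      ((∃ t : EuclideanSpace ℝ (Fin n), S = (fun y => t + y) '' K) ∧ X ⊆ S) → z ∈ S :=
  Iff.rfl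

theorem mem_convK_of_subset {K X : Set (EuclideanSpace ℝ (Fin n))} {z : EuclideanSpace ℝ (Fin n)}
    (hz : z ∈ convK K X) {t : EuclideanSpace ℝ (Fin n)} (hX : X ⊆ (fun y => t + y) '' K) :
    z ∈ (fun y => t + y) '' K :=
  mem_convK_iff.1 hz _ ⟨⟨t, rfl⟩, hX⟩

theorem convK_mono {K X Y : Set (EuclideanSpace ℝ (Fin n))} (hXY : X ⊆ Y) :
    convK K X ⊆ convK K Y :=
  fun _ hz => mem_convK_iff.2 fun _ ⟨⟨_, hS⟩, hYS⟩ =>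
    hS ▸ mem_convK_of_subset hz (hS ▸ hXY.trans hYS)

theorem caraK_of_forall_exists_finset {K : Set (EuclideanSpace ℝ (Fin n))} {c : ℕ}
    (hc : ∀ X : Set (EuclideanSpace ℝ (Fin n)), IsClosed X →
      (∃ t : EuclideanSpace ℝ (Fin n), X ⊆ (fun y => t + y) '' K) → ∀ z ∈ convK K X,
        ∃ X' : Finset (EuclideanSpace ℝ (Fin n)), ↑X' ⊆ X ∧ X'.card ≤ c ∧ z ∈ convK K ↑X') :
    caraK K c := by
  intro X hX hXt
  refine Subset.antisymm (fun z hz => ?_) (iUnion₂_subset fun X' hX' => convK_mono hX'.1)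
  obtain ⟨X', hX'X, hX'c, hzX'⟩ := hc X hX hXt z hz
  exact mem_iUnion₂.2 ⟨X', ⟨hX'X, hX'c⟩, hzX'⟩

def polyhedron (H : Set (EuclideanSpace ℝ (Fin n))) (b : EuclideanSpace ℝ (Fin n) → ℝ) :
    Set (EuclideanSpace ℝ (Fin n)) :=
  {y | ∀ a ∈ H, ⟪a, y⟫_ℝ ≤ b a}

section Polyhedron

variable {H : Set (EuclideanSpace ℝ (Fin n))} {b : EuclideanSpace ℝ (Fin n) → ℝ}

theorem mem_image_add_polyhedron_iff {t y : EuclideanSpace ℝ (Fin n)} :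
    y ∈ (fun y => t + y) '' polyhedron H b ↔ ∀ a ∈ H, ⟪a, y⟫_ℝ ≤ b a + ⟪a, t⟫_ℝ := by
  constructor
  · rintro ⟨w, hw, rfl⟩ a ha
    rw [inner_add_right]
    linarith [hw a ha]
  · refine fun hy => ⟨y - t, fun a ha => ?_, add_sub_cancel t y⟩
    rw [inner_sub_right]
    linarith [hy a ha]

theorem convH_subset_convK_polyhedron {X : Set (EuclideanSpace ℝ (Fin n))} :
    convH H X ⊆ convK (polyhedron H b) X := by
  refine fun z hz => mem_convK_iff.2 ?_
  rintro S ⟨⟨t, rfl⟩, hXS⟩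
  refine mem_image_add_polyhedron_iff.2 fun a ha =>
    mem_convH_iff.1 hz {y | ⟪a, y⟫_ℝ ≤ b a + ⟪a, t⟫_ℝ}
      ⟨⟨a, ha, _, rfl⟩, fun x hx => mem_image_add_polyhedron_iff.1 (hXS hx) a ha⟩

theorem mem_convH_of_forall_exists_inner_le {X : Set (EuclideanSpace ℝ (Fin n))}
    {z : EuclideanSpace ℝ (Fin n)} (hz : ∀ a ∈ H, ∃ x ∈ X, ⟪a, z⟫_ℝ ≤ ⟪a, x⟫_ℝ) :
    z ∈ convH H X := by
  rintro S ⟨⟨a, ha, β, rfl⟩, hXS⟩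
  obtain ⟨x, hxX, hzx⟩ := hz a ha
  exact hzx.trans (hXS hxX)

variable {X : Set (EuclideanSpace ℝ (Fin n))}
  {f : EuclideanSpace ℝ (Fin n) → EuclideanSpace ℝ (Fin n)}

theorem subset_image_add_polyhedron_of_isMaxOn (hf : ∀ a, IsMaxOn (fun x => ⟪a, x⟫_ℝ) X (f a))
    {t : EuclideanSpace ℝ (Fin n)} (ht : ∀ a ∈ H, ⟪a, f a⟫_ℝ ≤ b a + ⟪a, t⟫_ℝ) :
    X ⊆ (fun y => t + y) '' polyhedron H b :=
  fun _ hx => mem_image_add_polyhedron_iff.2 fun a ha => (hf a hx).trans (ht a ha)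

theorem exists_mem_segment_inner_eq {E : Type*} [NormedAddCommGroup E] [InnerProductSpace ℝ E]
    {a t t' : E} {c : ℝ} (h : ⟪a, t⟫_ℝ ≤ c) (h' : c ≤ ⟪a, t'⟫_ℝ) :
    ∃ τ ∈ segment ℝ t t', ⟪a, τ⟫_ℝ = c := by
  have hc : c ∈ segment ℝ ⟪a, t⟫_ℝ ⟪a, t'⟫_ℝ := by
    rw [segment_eq_Icc (h.trans h')]
    exact ⟨h, h'⟩
  exact (image_segment ℝ (innerₛₗ ℝ a).toAffineMap t t').superset hc

theorem mem_convK_image_erase {H : Finset (EuclideanSpace ℝ (Fin n))}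
    {t₀ a₀ z : EuclideanSpace ℝ (Fin n)}
    (ht₀ : X ⊆ (fun y => t₀ + y) '' polyhedron H b) (hfX : ∀ a, f a ∈ X)
    (hf : ∀ a, IsMaxOn (fun x => ⟪a, x⟫_ℝ) X (f a)) (hz : z ∈ convK (polyhedron H b) X)
    (ha₀ : a₀ ∈ H) (hz₀ : ⟪a₀, f a₀⟫_ℝ < ⟪a₀, z⟫_ℝ) :
    z ∈ convK (polyhedron H b) ((H.erase a₀).image f) := by
  rw [mem_convK_iff]
  rintro S ⟨⟨t, rfl⟩, hS⟩
  have ht : ∀ a ∈ H, a ≠ a₀ → ⟪a, f a⟫_ℝ ≤ b a + ⟪a, t⟫_ℝ := fun a ha ha₀ =>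
    mem_image_add_polyhedron_iff.1
      (hS (Finset.mem_image_of_mem f (Finset.mem_erase.2 ⟨ha₀, ha⟩))) a ha
  have ht' : ∀ a ∈ H, ⟪a, f a⟫_ℝ - b a ≤ ⟪a, t₀⟫_ℝ := fun a ha => by
    linarith [mem_image_add_polyhedron_iff.1 (ht₀ (hfX a)) a ha]
  suffices ⟪a₀, f a₀⟫_ℝ ≤ b a₀ + ⟪a₀, t⟫_ℝ from mem_convK_of_subset hz <|
    subset_image_add_polyhedron_of_isMaxOn hf fun a ha =>
      if h : a = a₀ then h ▸ this else ht a ha h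
  by_contra! hlt
  obtain ⟨τ, hτ, hτa₀⟩ := exists_mem_segment_inner_eq (c := ⟪a₀, f a₀⟫_ℝ - b a₀)
    (by linarith) (ht' a₀ ha₀)
  have hτX : X ⊆ (fun y => τ + y) '' polyhedron H b := by
    refine subset_image_add_polyhedron_of_isMaxOn hf fun a ha => ?_
    rcases eq_or_ne a a₀ with rfl | ha₀
    · linarith
    have hτa : ⟪a, f a⟫_ℝ - b a ≤ ⟪a, τ⟫_ℝ :=
      (convex_halfSpace_ge (innerₛₗ ℝ a).isLinear _).segment_subset
        (show _ ≤ ⟪a, t⟫_ℝ by linarith [ht a ha ha₀]) (ht' a ha) hτ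
    linarith
  linarith [mem_image_add_polyhedron_iff.1 (mem_convK_of_subset hz hτX) a₀ ha₀]

end Polyhedron

theorem stmt10_general {n : ℕ} (H : Finset (EuclideanSpace ℝ (Fin n)))
    (b : EuclideanSpace ℝ (Fin n) → ℝ) (K : Set (EuclideanSpace ℝ (Fin n)))
    (hK : K = {y | ∀ a ∈ H, ⟪a, y⟫_ℝ ≤ b a})
    (hKcomp : IsCompact K)
    (h k : ℕ)
    (hh : IsLeast {c : ℕ | caraH (H : Set (EuclideanSpace ℝ (Fin n))) c} h)
    (hk : IsLeast {c : ℕ | caraK K c} k) :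
    k ≤ max h (H.card - 1) := by
  obtain rfl : K = polyhedron H b := hK
  refine hk.2 (caraK_of_forall_exists_finset fun X hX ⟨t₀, ht₀⟩ z hz => ?_)
  rcases X.eq_empty_or_nonempty with rfl | hne
  · exact ⟨∅, by simp, by simp, by simpa using hz⟩
  have hXcomp : IsCompact X := (hKcomp.image (continuous_const_add t₀)).of_isClosed_subset hX ht₀
  choose f hfX hf using fun a : EuclideanSpace ℝ (Fin n) =>
    hXcomp.exists_isMaxOn hne (continuous_const.inner continuous_id :
      Continuous fun x => ⟪a, x⟫_ℝ).continuousOn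
  by_cases hzH : ∀ a ∈ H, ⟪a, z⟫_ℝ ≤ ⟪a, f a⟫_ℝ
  · have hzX := mem_convH_of_forall_exists_inner_le fun a ha => ⟨f a, hfX a, hzH a ha⟩
    rw [hh.1 X hX] at hzX
    obtain ⟨X', ⟨hX'X, hX'h⟩, hzX'⟩ := mem_iUnion₂.1 hzX
    exact ⟨X', hX'X, hX'h.trans (le_max_left _ _), convH_subset_convK_polyhedron hzX'⟩
  push Not at hzH
  obtain ⟨a₀, ha₀, hz₀⟩ := hzH
  refine ⟨(H.erase a₀).image f, by
    rw [Finset.coe_image]; exact (image_subset_range _ _).trans (range_subset_iff.2 hfX), ?_,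
    mem_convK_image_erase ht₀ hfX hf hz ha₀ hz₀⟩
  exact Finset.card_image_le.trans ((Finset.card_erase_of_mem ha₀).trans_le (le_max_right _ _))

theorem stmt10 {n : ℕ} (H : Finset (EuclideanSpace ℝ (Fin n))) (h0 : (0 : EuclideanSpace ℝ (Fin n)) ∉ H)
    (b : EuclideanSpace ℝ (Fin n) → ℝ) (K : Set (EuclideanSpace ℝ (Fin n)))
    (hK : K = {y | ∀ a ∈ H, ⟪a, y⟫_ℝ ≤ b a})
    (hKcomp : IsCompact K) (hKint : (interior K).Nonempty)
    (hfacet : ∀ a ∈ H, ∃ y : EuclideanSpace ℝ (Fin n),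
      b a < ⟪a, y⟫_ℝ ∧ ∀ a' ∈ H, a' ≠ a → ⟪a', y⟫_ℝ ≤ b a')
    (h k : ℕ)
    (hh : IsLeast {c : ℕ | caraH (H : Set (EuclideanSpace ℝ (Fin n))) c} h)
    (hk : IsLeast {c : ℕ | caraK K c} k) :
    k ≤ max h (H.card - 1) :=
  stmt10_general H b K hK hKcomp h k hh hk
end

section
/- Let a_1,...,a_k ∈ ℝ^n be in conical position (each a_i is strictly separable from 0 and not in the positive hull of the others) and suppose all a_i lie in an open halfspace {a : ⟨n⃗, a⟩ > 0}. Let P(a) denote the radial projection of a onto the hyperplane {a : ⟨n⃗, a⟩ = 1}, i.e., P(a) = a / ⟨n⃗, a⟩. Then P(a_1),...,P(a_k) are in convex position: no P(a_i) lies in the convex hull of the others. -/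
/-!
The cone spanned by the `a j`, `j ≠ i`, is convex and contains every positive rescaling
`P (a j)`, hence contains their convex hull. If `P (a i)` lay in that hull, the positive multiple
`a i = ⟪n⃗, a i⟫ • P (a i)` would lie in the cone, contradicting conical position.
-/

namespace PointedCone

variable {𝕜 E ι : Type*} [AddCommGroup E]

lemma mem_hull_image_finset_iff [Semiring 𝕜] [PartialOrder 𝕜] [IsOrderedRing 𝕜] [Module 𝕜 E]
    {v : ι → E} {s : Finset ι} {x : E} :
    x ∈ hull 𝕜 (v '' s) ↔ ∃ lam : ι → 𝕜, (∀ j, 0 ≤ lam j) ∧ x = ∑ j ∈ s, lam j • v j := by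
  rw [Submodule.mem_span_image_finset_iff_exists_fun']
  constructor
  · rintro ⟨c, rfl⟩
    exact ⟨fun j => c j, fun j => (c j).2, rfl⟩
  · rintro ⟨lam, hlam, rfl⟩
    exact ⟨fun j => ⟨lam j, hlam j⟩, rfl⟩

variable [Field 𝕜] [LinearOrder 𝕜] [IsStrictOrderedRing 𝕜] [Module 𝕜 E]

lemma convexHull_smul_image_subset_hull {v : ι → E} {c : ι → 𝕜} {s : Set ι}
    (hc : ∀ j ∈ s, 0 ≤ c j) :
    convexHull 𝕜 ((fun j => c j • v j) '' s) ⊆ hull 𝕜 (v '' s) :=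
  convexHull_min
    (Set.image_subset_iff.2 fun j hj => smul_mem _ (hc j hj) (subset_hull ⟨j, hj, rfl⟩))
    (PointedCone.convex _)

lemma mem_hull_of_smul_mem_convexHull {v : ι → E} {c : ι → 𝕜} {s : Set ι} {i : ι}
    (hc : ∀ j ∈ s, 0 ≤ c j) (hci : 0 < c i)
    (h : c i • v i ∈ convexHull 𝕜 ((fun j => c j • v j) '' s)) :
    v i ∈ hull 𝕜 (v '' s) :=
  (smul_mem_iff _ hci).1 (convexHull_smul_image_subset_hull hc h)

end PointedCone

local notation "⟪" x ", " y "⟫_ℝ" => @inner ℝ _ _ x y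

theorem stmt12 {n k : ℕ} (a : Fin k → EuclideanSpace ℝ (Fin n))
    (nv : EuclideanSpace ℝ (Fin n)) (hside : ∀ i, 0 < ⟪nv, a i⟫_ℝ)
    (hconical : ∀ i, ¬ ∃ lam : Fin k → ℝ, (∀ j, 0 ≤ lam j) ∧
      a i = ∑ j ∈ Finset.univ.erase i, lam j • a j) :
    ∀ i, (⟪nv, a i⟫_ℝ)⁻¹ • a i ∉
      convexHull ℝ ((fun j => (⟪nv, a j⟫_ℝ)⁻¹ • a j) '' {j : Fin k | j ≠ i}) := by
  intro i hmem
  have hcone : a i ∈ PointedCone.hull ℝ (a '' {j | j ≠ i}) :=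
    PointedCone.mem_hull_of_smul_mem_convexHull (fun j _ => (inv_pos.2 (hside j)).le)
      (inv_pos.2 (hside i)) hmem
  have herase : {j | j ≠ i} = ↑(Finset.univ.erase i) := by ext; simp
  rw [herase, PointedCone.mem_hull_image_finset_iff] at hcone
  exact hconical i hcone
end

section
/- Let p, q, r be points in ℝ^m with p ≠ q and dist(p, r) > 0, and suppose that r realizes the minimal distance from p over the segment [r, q], i.e. dist(p, r) ≤ dist(p, y) for all y in [r, q]. Then in the triangle p r q, every point s strictly inside the segment [p, q] satisfies dist(s, [r, q]) < dist(p, r). -/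
open Metric

theorem stmt14 {m : ℕ} (C : Set (EuclideanSpace ℝ (Fin m))) (hC : Convex ℝ C)
    (p q r s : EuclideanSpace ℝ (Fin m))
    (hq : q ∈ C) (hr : r ∈ C)
    (hmin : ∀ y ∈ C, dist p r ≤ dist p y)
    (hpr : 0 < dist p r)
    (hs : s ∈ segment ℝ p q) (hsp : s ≠ p) (hsq : s ≠ q) :
    infDist s (segment ℝ r q) < dist p r := by
  obtain ⟨a, b, ha, hb, hab, hsab⟩ := hs
  have hb' : b ≠ 0 := by
    rintro rfl
    apply hsp
    rw [← hsab]
    simp [show a = 1 by linarith]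
  have ha1 : a < 1 := by
    rcases lt_or_eq_of_le hb with h | h
    · linarith
    · exact absurd h.symm hb'
  set w := a • r + b • q with hw
  have hwmem : w ∈ segment ℝ r q := ⟨a, b, ha, hb, hab, rfl⟩
  have hdist : dist s w = a * dist p r := by
    rw [dist_eq_norm, ← hsab, hw, dist_eq_norm]
    have : a • p + b • q - (a • r + b • q) = a • (p - r) := by
      module
    rw [this, norm_smul, Real.norm_eq_abs, abs_of_nonneg ha]
  calc infDist s (segment ℝ r q) ≤ dist s w := infDist_le_dist_of_mem hwmem
    _ = a * dist p r := hdist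
    _ < 1 * dist p r := by apply mul_lt_mul_of_pos_right ha1 hpr
    _ = dist p r := one_mul _
end
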